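/- Let D be a lock diagram and T ∈ KKD(D), with the lock-tableau labeling L_T of the non-ghost cells of T (extended to ghost cells by assigning a ghost cell ⟨r,c⟩ the label of the highest non-ghost cell weakly below it in column c). If ⟨r,c₁⟩ and ⟨r,c₂⟩ are ghost cells of T in the same row with c₁ < c₂, then L_T(r,c₁) < L_T(r,c₂). -/
import Mathlib


open Finset

/-- A diagram: a finite set of cells in ℕ×ℕ (recorded as (row, column)),
some of which may be marked as ghost cells. -/
structure Diagram where
  cells : Finset (ℕ × ℕ)
  ghosts : Finset (ℕ × ℕ)
deriving DecidableEq

/-- `(r,c)` is the rightmost cell (ghost or not) in row `r` of `D`. -/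
def Rightmost (D : Diagram) (r c : ℕ) : Prop :=
  (r, c) ∈ D.cells ∧ ∀ c' > c, (r, c') ∉ D.cells

/-- A nontrivial K-Kohnert move at row `r` of `D` is possible, taking the
rightmost cell `(r,c)` of row `r` (a non-ghost cell) down to the highest empty
position `(rhat, c)` below it in column `c`, with no ghost cell in between. -/
def KohnertMovable (D : Diagram) (r c rhat : ℕ) : Prop :=
  Rightmost D r c ∧ (r, c) ∉ D.ghosts ∧
  1 ≤ rhat ∧ rhat < r ∧ (rhat, c) ∉ D.cells ∧
  ∀ r', rhat < r' → r' < r → (r', c) ∈ D.cells ∧ (r', c) ∉ D.ghosts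

/-- Result of a Kohnert move: the cell `(r,c)` moves to `(rhat,c)`. -/
def applyKohnert (D : Diagram) (r c rhat : ℕ) : Diagram :=
  ⟨insert (rhat, c) (D.cells.erase (r, c)), D.ghosts⟩

/-- Result of a ghost move: the cell `(r,c)` moves to `(rhat,c)`, leaving a
ghost cell at `(r,c)`. -/
def applyGhost (D : Diagram) (r c rhat : ℕ) : Diagram :=
  ⟨insert (rhat, c) D.cells, insert (r, c) D.ghosts⟩

/-- One (nontrivial) K-Kohnert move. -/
def KStep (D T : Diagram) : Prop :=
  ∃ r c rhat, KohnertMovable D r c rhat ∧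
    (T = applyKohnert D r c rhat ∨ T = applyGhost D r c rhat)

/-- One (nontrivial) ghost move. -/
def GStep (D T : Diagram) : Prop :=
  ∃ r c rhat, KohnertMovable D r c rhat ∧ T = applyGhost D r c rhat

/-- All diagrams obtainable from `D` by sequences of K-Kohnert moves. -/
def KKD (D : Diagram) : Set Diagram := {T | Relation.ReflTransGen KStep D T}

/-- All diagrams obtainable from `D` by sequences of ghost moves. -/
def GKD (D : Diagram) : Set Diagram := {T | Relation.ReflTransGen GStep D T}

/-- Maximum number of ghost cells over `KKD D`. -/
noncomputable def MaxG (D : Diagram) : ℕ :=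
  sSup {n | ∃ T ∈ KKD D, T.ghosts.card = n}

/-- Maximum number of ghost cells over `GKD D`. -/
noncomputable def MaxGhat (D : Diagram) : ℕ :=
  sSup {n | ∃ T ∈ GKD D, T.ghosts.card = n}

/-- Dark clouds of a ghost-free diagram: working from the top row down, mark in
each row the rightmost cell having no marked cell above it in its column. -/
def dark (D : Finset (ℕ × ℕ)) : Finset (ℕ × ℕ) :=
  ((List.range (D.sup Prod.fst + 1)).reverse).foldl
    (fun acc r =>
      let cand := (D.filter (fun p => p.1 = r ∧ ∀ q ∈ acc, q.2 ≠ p.2)).image Prod.snd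
      if h : cand.Nonempty then insert (r, cand.max' h) acc else acc) ∅

/-- Snowflakes of the snow diagram: empty positions lying below a dark cloud
in its column. -/
def snowflakes (D : Finset (ℕ × ℕ)) : Finset (ℕ × ℕ) :=
  ((Finset.range (D.sup Prod.fst + 1)) ×ˢ (D.image Prod.snd)).filter
    (fun p => 1 ≤ p.1 ∧ p ∉ D ∧ ∃ q ∈ dark D, q.2 = p.2 ∧ p.1 < q.1)

/-- Number of snowflakes of the snow diagram of a ghost-free diagram. -/
def sf (D : Finset (ℕ × ℕ)) : ℕ := (snowflakes D).card

/-- A generalized skew diagram: each nonempty row is a contiguous run of cells,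
and both leftmost and rightmost columns weakly increase with the row index. -/
def IsGenSkew (D : Finset (ℕ × ℕ)) : Prop :=
  (∀ p ∈ D, 1 ≤ p.1 ∧ 1 ≤ p.2) ∧
  (∀ r c₁ c c₂, (r, c₁) ∈ D → (r, c₂) ∈ D → c₁ ≤ c → c ≤ c₂ → (r, c) ∈ D) ∧
  (∀ r₁ r₂ c₁, r₁ < r₂ → (r₁, c₁) ∈ D → (∃ c, (r₂, c) ∈ D) →
      ∃ c₂, c₁ ≤ c₂ ∧ (r₂, c₂) ∈ D) ∧
  (∀ r₁ r₂ c₂, r₁ < r₂ → (r₂, c₂) ∈ D → (∃ c, (r₁, c) ∈ D) →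
      ∃ c₁, c₁ ≤ c₂ ∧ (r₁, c₁) ∈ D)

/-- `Key(D)`: the minimal key diagram containing `D`. -/
def keyOf (D : Finset (ℕ × ℕ)) : Finset (ℕ × ℕ) :=
  D.biUnion (fun p => (Finset.Icc 1 p.2).image (fun c => (p.1, c)))

/-- Largest index `i < j` (0-indexed) with `α_i > 0`. -/
def prevIdx (α : List ℕ) (j : ℕ) : Option ℕ :=
  ((List.range j).filter (fun i => 0 < α.getD i 0)).max?

/-- Contribution of step 2 of the skew-diagram construction at (0-indexed) row `j`. -/
def step2contrib (α : List ℕ) (j : ℕ) : ℕ :=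
  if 0 < α.getD j 0 then
    match prevIdx α j with
    | none => 0
    | some i => α.getD i 0 - α.getD j 0
  else 0

/-- Total rightward shift of (0-indexed) row `k` in the skew-diagram construction. -/
def rowShift (α : List ℕ) (k : ℕ) : ℕ :=
  (∑ j ∈ Finset.range (k + 1), step2contrib α j) +
    ((List.range k).filter (fun i => α.getD i 0 = 0)).length

/-- The skew diagram `S(α)` of a weak composition `α`. -/
def skewDiagram (α : List ℕ) : Finset (ℕ × ℕ) :=
  (Finset.range α.length).biUnion (fun i =>
    (Finset.Icc 1 (α.getD i 0)).image (fun c => (i + 1, c + rowShift α i)))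

/-- The lock diagram of a weak composition `α`: `α_i` right-justified cells in row `i`. -/
def lockDiagram (α : List ℕ) : Finset (ℕ × ℕ) :=
  (Finset.range α.length).biUnion (fun i =>
    (Finset.range (α.getD i 0)).image (fun j => (i + 1, α.foldr max 0 - j)))

/-- `L` is a lock-tableau labeling of content `α` on the given set of cells. -/
def IsLockLabeling (α : List ℕ) (cells : Finset (ℕ × ℕ)) (L : ℕ × ℕ → ℕ) : Prop :=
  (∀ p ∈ cells, 1 ≤ L p ∧ L p ≤ α.length) ∧
  (∀ j, 1 ≤ j → j ≤ α.length → 0 < α.getD (j - 1) 0 →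
    ∀ c, α.foldr max 0 - α.getD (j - 1) 0 + 1 ≤ c → c ≤ α.foldr max 0 →
      ∃! p, p ∈ cells ∧ p.2 = c ∧ L p = j) ∧
  (∀ p ∈ cells, p.1 ≤ L p) ∧
  (∀ p ∈ cells, ∀ q ∈ cells, L p = L q → p.2 < q.2 → q.1 ≤ p.1) ∧
  (∀ p ∈ cells, ∀ q ∈ cells, p.2 = q.2 → p.1 < q.1 → L p < L q)

/-- Label of the position `(r,c)` of `T`: for a ghost cell, the label of the
highest non-ghost cell weakly below it in column `c`. -/
def ghostLabel (T : Diagram) (L : ℕ × ℕ → ℕ) (r c : ℕ) : ℕ :=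
  L (((T.cells \ T.ghosts).filter (fun p => p.2 = c ∧ p.1 ≤ r)).sup Prod.fst, c)

/-- The labels, within one column with row set `Rc`, of the modified snow
diagram, where `U` is the set of rows occupied in later columns; rows are
processed from top to bottom. -/
def colLabelList (Rc U : Finset ℕ) : List (ℕ × ℕ) :=
  ((Rc.sort (· ≤ ·)).reverse).foldl
    (fun acc r =>
      if r ∈ U then (r, r) :: acc
      else
        let cand := U.filter (fun s => s < r ∧ ∀ q ∈ acc, q.2 ≠ s)
        if h : cand.Nonempty then (r, cand.max' h) :: acc else (r, 1) :: acc)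
    []

/-- The label of a cell `p ∈ D` in the modified snow diagram `snow-hat(D)`. -/
def hatLabel (D : Finset (ℕ × ℕ)) (p : ℕ × ℕ) : ℕ :=
  ((colLabelList ((D.filter (fun q => q.2 = p.2)).image Prod.fst)
      ((D.filter (fun q => p.2 < q.2)).image Prod.fst)).lookup p.1).getD 0

/-- Number of snowflakes of the modified snow diagram `snow-hat(D)`. -/
def sfhat (D : Finset (ℕ × ℕ)) : ℕ :=
  (((Finset.range (D.sup Prod.fst + 1)) ×ˢ (D.image Prod.snd)).filter
    (fun p => 1 ≤ p.1 ∧ p ∉ D ∧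
      ∃ q ∈ D, q.2 = p.2 ∧ p.1 < q.1 ∧ hatLabel D q ≤ p.1)).card

/-- Cells of `D` that are rightmost in their row. -/
def rmostCells (D : Finset (ℕ × ℕ)) : Finset (ℕ × ℕ) :=
  D.filter (fun p => ∀ q ∈ D, q.1 = p.1 → q.2 ≤ p.2)

/-- `S(D)`: cells that are not rightmost in their row and such that no cell
above them in their column is rightmost in its row. -/
def SofD (D : Finset (ℕ × ℕ)) : Finset (ℕ × ℕ) :=
  D.filter (fun p => p ∉ rmostCells D ∧
    ∀ q ∈ D, q.2 = p.2 → p.1 < q.1 → q ∉ rmostCells D)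

/-- Restriction of `D` to the columns in `C`. -/
def Res (D : Finset (ℕ × ℕ)) (C : Finset ℕ) : Finset (ℕ × ℕ) :=
  D.filter (fun p => p.2 ∈ C)

open Classical in
/-- The ghost move at row `r`, as a function (identity when no move is possible). -/
noncomputable def gmove (T : Diagram) (r : ℕ) : Diagram :=
  if h : ∃ p : ℕ × ℕ, KohnertMovable T r p.1 p.2 then
    applyGhost T r h.choose.1 h.choose.2
  else T


/-! ### Auxiliary development for Statement 9 -/

namespace LockAux

open Finset

/-- The label set of column `c`: rows `j` whose lock-row reaches column `c`. -/
def Sset (α : List ℕ) (c : ℕ) : Finset ℕ :=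
  (Finset.Icc 1 α.length).filter (fun j => α.foldr max 0 < c + α.getD (j - 1) 0)

/-- Rank of `v` within `Sset α c`. -/
def rk (α : List ℕ) (c v : ℕ) : ℕ := ((Sset α c).filter (fun x => x ≤ v)).card

/-- Number of elements of `A` in column `c` with row at most `r`. -/
def kkf (A : Finset (ℕ × ℕ)) (c r : ℕ) : ℕ :=
  (A.filter (fun p => p.2 = c ∧ p.1 ≤ r)).card

/-- Non-ghost cells of a diagram. -/
def ngs (T : Diagram) : Finset (ℕ × ℕ) := T.cells \ T.ghosts

abbrev kk (T : Diagram) (c r : ℕ) : ℕ := kkf (ngs T) c r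

lemma mem_Sset {α : List ℕ} {c j : ℕ} :
    j ∈ Sset α c ↔ 1 ≤ j ∧ j ≤ α.length ∧ α.foldr max 0 < c + α.getD (j - 1) 0 := by
  simp [Sset, Finset.mem_filter, Finset.mem_Icc, and_assoc]

lemma Sset_mono {α : List ℕ} {c c' : ℕ} (h : c ≤ c') : Sset α c ⊆ Sset α c' := by
  intro j hj
  rw [mem_Sset] at hj ⊢
  omega

lemma rk_mono {α : List ℕ} {c : ℕ} {v w : ℕ} (h : v ≤ w) : rk α c v ≤ rk α c w := by
  apply Finset.card_le_card
  intro x hx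
  rw [Finset.mem_filter] at hx ⊢
  exact ⟨hx.1, le_trans hx.2 h⟩

lemma rk_pos {α : List ℕ} {c v : ℕ} (hv : v ∈ Sset α c) : 1 ≤ rk α c v := by
  have : v ∈ (Sset α c).filter (fun x => x ≤ v) := Finset.mem_filter.2 ⟨hv, le_refl v⟩
  simpa [rk] using Finset.card_pos.2 ⟨v, this⟩

lemma rk_lt {α : List ℕ} {c v w : ℕ} (hv : v ∈ Sset α c) (hw : w ∈ Sset α c)
    (h : v < w) : rk α c v < rk α c w := by
  apply Finset.card_lt_card
  refine (Finset.ssubset_iff_of_subset ?_).2 ⟨w, Finset.mem_filter.2 ⟨hw, le_refl w⟩, ?_⟩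
  · intro x hx
    rw [Finset.mem_filter] at hx ⊢
    exact ⟨hx.1, le_trans hx.2 (le_of_lt h)⟩
  · rw [Finset.mem_filter]
    push_neg
    intro _
    omega

lemma le_of_rk_le {α : List ℕ} {c v w : ℕ} (hv : v ∈ Sset α c) (hw : w ∈ Sset α c)
    (h : rk α c v ≤ rk α c w) : v ≤ w := by
  by_contra hlt
  push_neg at hlt
  exact absurd h (not_le.2 (rk_lt hw hv hlt))

lemma lt_of_rk_lt {α : List ℕ} {c v w : ℕ} (hv : v ∈ Sset α c) (hw : w ∈ Sset α c)
    (h : rk α c v < rk α c w) : v < w := by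
  by_contra hle
  push_neg at hle
  exact absurd h (not_lt.2 (rk_mono hle))

lemma rk_le_card {α : List ℕ} {c v : ℕ} : rk α c v ≤ (Sset α c).card :=
  Finset.card_le_card (Finset.filter_subset _ _)

lemma rk_split {α : List ℕ} {c v w : ℕ} (h : v ≤ w) :
    rk α c w = rk α c v + ((Sset α c).filter (fun x => v < x ∧ x ≤ w)).card := by
  rw [rk, rk, ← Finset.card_union_of_disjoint]
  · congr 1
    ext x
    simp only [Finset.mem_union, Finset.mem_filter]
    constructor
    · rintro ⟨hS, hxw⟩
      rcases le_or_gt x v with h' | h'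
      · exact Or.inl ⟨hS, h'⟩
      · exact Or.inr ⟨hS, h', hxw⟩
    · rintro (⟨hS, hxv⟩ | ⟨hS, _, hxw⟩)
      · exact ⟨hS, le_trans hxv h⟩
      · exact ⟨hS, hxw⟩
  · rw [Finset.disjoint_left]
    intro x hx hx'
    rw [Finset.mem_filter] at hx hx'
    omega

lemma rk_gap {α : List ℕ} {c c' v w : ℕ} (hcc : c ≤ c') (h : v ≤ w) :
    rk α c w + rk α c' v ≤ rk α c v + rk α c' w := by
  rw [rk_split (c := c) h, rk_split (c := c') h]
  have hsub : (Sset α c).filter (fun x => v < x ∧ x ≤ w) ⊆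
      (Sset α c').filter (fun x => v < x ∧ x ≤ w) := by
    intro x hx
    rw [Finset.mem_filter] at hx ⊢
    exact ⟨Sset_mono hcc hx.1, hx.2⟩
  have := Finset.card_le_card hsub
  omega

lemma exists_rank (S : Finset ℕ) :
    ∀ m, 1 ≤ m → m ≤ S.card → ∃ v ∈ S, (S.filter (fun x => x ≤ v)).card = m := by
  intro m
  induction m with
  | zero => omega
  | succ m ih =>
    intro _ hm1
    rcases Nat.eq_zero_or_pos m with hm0 | hmpos
    · subst hm0
      have hne : S.Nonempty := Finset.card_pos.1 (by omega)
      refine ⟨S.min' hne, S.min'_mem hne, ?_⟩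
      have : S.filter (fun x => x ≤ S.min' hne) = {S.min' hne} := by
        apply Finset.eq_singleton_iff_unique_mem.2
        refine ⟨Finset.mem_filter.2 ⟨S.min'_mem hne, le_refl _⟩, ?_⟩
        intro x hx
        rw [Finset.mem_filter] at hx
        exact le_antisymm hx.2 (S.min'_le x hx.1)
      rw [this, Finset.card_singleton]
    · obtain ⟨v, hv, hcard⟩ := ih hmpos (by omega)
      have hcompl : (S.filter (fun x => x ≤ v)).card +
          (S.filter (fun x => ¬ x ≤ v)).card = S.card :=
        Finset.card_filter_add_card_filter_not _
      have hUpos : 0 < (S.filter (fun x => ¬ x ≤ v)).card := by omega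
      have hUne : (S.filter (fun x => ¬ x ≤ v)).Nonempty := Finset.card_pos.1 hUpos
      set u := (S.filter (fun x => ¬ x ≤ v)).min' hUne with hu
      have humem : u ∈ S.filter (fun x => ¬ x ≤ v) := Finset.min'_mem _ _
      rw [Finset.mem_filter] at humem
      have hvu : v < u := by omega
      refine ⟨u, humem.1, ?_⟩
      have heq : S.filter (fun x => x ≤ u) = insert u (S.filter (fun x => x ≤ v)) := by
        ext x
        simp only [Finset.mem_insert, Finset.mem_filter]
        constructor
        · rintro ⟨hxS, hxu⟩
          rcases le_or_gt x v with h' | h'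
          · exact Or.inr ⟨hxS, h'⟩
          · left
            have : u ≤ x := Finset.min'_le _ x (Finset.mem_filter.2 ⟨hxS, by omega⟩)
            omega
        · rintro (rfl | ⟨hxS, hxv⟩)
          · exact ⟨humem.1, le_refl _⟩
          · exact ⟨hxS, by omega⟩
      rw [heq, Finset.card_insert_of_notMem, hcard]
      rw [Finset.mem_filter]
      push_neg
      intro _
      omega

lemma exists_rk (α : List ℕ) (c m : ℕ) (h1 : 1 ≤ m) (h2 : m ≤ (Sset α c).card) :
    ∃ v ∈ Sset α c, rk α c v = m :=
  exists_rank (Sset α c) m h1 h2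

lemma kkf_mono {A : Finset (ℕ × ℕ)} {c : ℕ} {r r' : ℕ} (h : r ≤ r') :
    kkf A c r ≤ kkf A c r' := by
  apply Finset.card_le_card
  intro p hp
  rw [Finset.mem_filter] at hp ⊢
  exact ⟨hp.1, hp.2.1, le_trans hp.2.2 h⟩

lemma kkf_succ_le (A : Finset (ℕ × ℕ)) (c t : ℕ) : kkf A c (t + 1) ≤ kkf A c t + 1 := by
  have hsub : A.filter (fun p => p.2 = c ∧ p.1 ≤ t + 1) ⊆
      insert ((t + 1 : ℕ), c) (A.filter (fun p => p.2 = c ∧ p.1 ≤ t)) := by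
    intro p hp
    rw [Finset.mem_filter] at hp
    rw [Finset.mem_insert]
    by_cases hpt : p.1 = t + 1
    · left
      obtain ⟨p1, p2⟩ := p
      simp only [Prod.mk.injEq]
      exact ⟨hpt, hp.2.1⟩
    · right
      rw [Finset.mem_filter]
      exact ⟨hp.1, hp.2.1, by omega⟩
  calc kkf A c (t + 1) ≤ (insert ((t + 1 : ℕ), c) (A.filter (fun p => p.2 = c ∧ p.1 ≤ t))).card :=
        Finset.card_le_card hsub
    _ ≤ kkf A c t + 1 := Finset.card_insert_le _ _

lemma kkf_succ_mem {A : Finset (ℕ × ℕ)} {c t : ℕ} (h : ((t + 1 : ℕ), c) ∈ A) :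
    kkf A c (t + 1) = kkf A c t + 1 := by
  have heq : A.filter (fun p => p.2 = c ∧ p.1 ≤ t + 1) =
      insert ((t + 1 : ℕ), c) (A.filter (fun p => p.2 = c ∧ p.1 ≤ t)) := by
    ext p
    simp only [Finset.mem_insert, Finset.mem_filter]
    constructor
    · rintro ⟨hpA, hpc, hpt⟩
      by_cases hp1 : p.1 = t + 1
      · left
        obtain ⟨p1, p2⟩ := p
        simp only [Prod.mk.injEq]
        exact ⟨hp1, hpc⟩
      · right
        exact ⟨hpA, hpc, by omega⟩
    · rintro (rfl | ⟨hpA, hpc, hpt⟩)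
      · exact ⟨h, rfl, le_refl _⟩
      · exact ⟨hpA, hpc, by omega⟩
  rw [kkf, heq, Finset.card_insert_of_notMem]
  · rfl
  · rw [Finset.mem_filter]
    push_neg
    intro _ _
    omega

lemma kkf_add_le (A : Finset (ℕ × ℕ)) (c r d : ℕ) : kkf A c (r + d) ≤ kkf A c r + d := by
  induction d with
  | zero => simp
  | succ d ih =>
    have h1 := kkf_succ_le A c (r + d)
    have e : r + (d + 1) = r + d + 1 := by omega
    rw [e]
    omega

lemma kkf_run {A : Finset (ℕ × ℕ)} {c r : ℕ} :
    ∀ {d : ℕ}, (∀ t, r < t → t ≤ r + d → ((t : ℕ), c) ∈ A) →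
    kkf A c (r + d) = kkf A c r + d := by
  intro d
  induction d with
  | zero => simp
  | succ d ih =>
    intro h
    have h1 : kkf A c (r + d) = kkf A c r + d := ih (fun t ht1 ht2 => h t ht1 (by omega))
    have h2 : kkf A c (r + d + 1) = kkf A c (r + d) + 1 :=
      kkf_succ_mem (h (r + d + 1) (by omega) (by omega))
    have e : r + (d + 1) = r + d + 1 := by omega
    rw [e]
    omega

lemma kkf_pred_of_notMem {A : Finset (ℕ × ℕ)} {c s : ℕ} (hs : 1 ≤ s)
    (h : ((s : ℕ), c) ∉ A) : kkf A c s = kkf A c (s - 1) := by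
  unfold kkf
  congr 1
  ext p
  simp only [Finset.mem_filter]
  constructor
  · rintro ⟨hpA, hpc, hps⟩
    refine ⟨hpA, hpc, ?_⟩
    have : p.1 ≠ s := by
      intro heq
      apply h
      have : p = (s, c) := by
        obtain ⟨p1, p2⟩ := p
        simp_all
      rwa [this] at hpA
    omega
  · rintro ⟨hpA, hpc, hps⟩
    exact ⟨hpA, hpc, by omega⟩

lemma kkf_le_col (A : Finset (ℕ × ℕ)) (c r : ℕ) :
    kkf A c r ≤ (A.filter (fun p => p.2 = c)).card := by
  apply Finset.card_le_card
  intro p hp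
  rw [Finset.mem_filter] at hp ⊢
  exact ⟨hp.1, hp.2.1⟩

end LockAux


namespace LockAux

open Finset

/-- Bound on list entries by the foldr-max. -/
lemma getD_le_foldr (α : List ℕ) (i : ℕ) : α.getD i 0 ≤ α.foldr max 0 := by
  induction α generalizing i with
  | nil => simp
  | cons a l ih =>
    cases i with
    | zero => simp [List.getD]
    | succ i =>
      have h1 : (a :: l).getD (i + 1) 0 = l.getD i 0 := rfl
      have h2 : (a :: l).foldr max 0 = max a (l.foldr max 0) := rfl
      rw [h1, h2]
      exact le_trans (ih i) (le_max_right _ _)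

lemma lock_bounds {α : List ℕ} {p : ℕ × ℕ} (hp : p ∈ lockDiagram α) :
    1 ≤ p.1 ∧ 1 ≤ p.2 ∧ p.2 ≤ α.foldr max 0 := by
  rw [lockDiagram, Finset.mem_biUnion] at hp
  obtain ⟨i, hi, hp⟩ := hp
  rw [Finset.mem_image] at hp
  obtain ⟨j, hj, rfl⟩ := hp
  rw [Finset.mem_range] at hj
  have := getD_le_foldr α i
  simp only
  omega

lemma mem_lock {α : List ℕ} {m c : ℕ} (hc : c ≤ α.foldr max 0) :
    (m, c) ∈ lockDiagram α ↔ m ∈ Sset α c := by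
  rw [lockDiagram, Finset.mem_biUnion, mem_Sset]
  constructor
  · rintro ⟨i, hi, hp⟩
    rw [Finset.mem_image] at hp
    obtain ⟨j, hj, heq⟩ := hp
    rw [Finset.mem_range] at hj
    rw [Finset.mem_range] at hi
    obtain ⟨h1, h2⟩ := Prod.mk.injEq .. ▸ heq
    have := getD_le_foldr α i
    have hm : m = i + 1 := h1.symm
    subst hm
    refine ⟨by omega, by omega, ?_⟩
    simp only [Nat.add_sub_cancel]
    omega
  · rintro ⟨h1, h2, h3⟩
    refine ⟨m - 1, Finset.mem_range.2 (by omega), ?_⟩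
    rw [Finset.mem_image]
    refine ⟨α.foldr max 0 - c, Finset.mem_range.2 (by omega), ?_⟩
    have : α.foldr max 0 - (α.foldr max 0 - c) = c := by omega
    rw [this]
    have : m - 1 + 1 = m := by omega
    rw [this]

lemma lock_col {α : List ℕ} {c : ℕ} (hc : c ≤ α.foldr max 0) :
    (lockDiagram α).filter (fun p => p.2 = c) = (Sset α c).image (fun m => (m, c)) := by
  ext p
  rw [Finset.mem_filter, Finset.mem_image]
  constructor
  · rintro ⟨hp, hpc⟩
    refine ⟨p.1, ?_, ?_⟩
    · rw [← mem_lock hc]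
      have : (p.1, c) = p := by
        obtain ⟨p1, p2⟩ := p
        simp_all
      rwa [this]
    · obtain ⟨p1, p2⟩ := p
      simp_all
  · rintro ⟨m, hm, rfl⟩
    exact ⟨(mem_lock hc).2 hm, rfl⟩

lemma lock_kk {α : List ℕ} {c : ℕ} (hc : c ≤ α.foldr max 0) (s : ℕ) :
    kkf (lockDiagram α) c s = rk α c s := by
  rw [kkf, rk]
  have heq : (lockDiagram α).filter (fun p => p.2 = c ∧ p.1 ≤ s) =
      ((Sset α c).filter (fun x => x ≤ s)).image (fun m => (m, c)) := by
    ext p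
    rw [Finset.mem_filter, Finset.mem_image]
    constructor
    · rintro ⟨hp, hpc, hps⟩
      refine ⟨p.1, Finset.mem_filter.2 ⟨?_, hps⟩, ?_⟩
      · rw [← mem_lock hc]
        have : (p.1, c) = p := by
          obtain ⟨p1, p2⟩ := p
          simp_all
        rwa [this]
      · obtain ⟨p1, p2⟩ := p
        simp_all
    · rintro ⟨m, hm, rfl⟩
      rw [Finset.mem_filter] at hm
      exact ⟨(mem_lock hc).2 hm.1, rfl, hm.2⟩
  rw [heq, Finset.card_image_of_injective _ (fun x y h => (Prod.mk.injEq .. ▸ h).1)]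

/-- The inductive invariant maintained along K-Kohnert moves from a lock diagram. -/
structure Inv (α : List ℕ) (T : Diagram) : Prop where
  gsub : T.ghosts ⊆ T.cells
  bounds : ∀ p ∈ T.cells, 1 ≤ p.1 ∧ 1 ≤ p.2 ∧ p.2 ≤ α.foldr max 0
  colcard : ∀ c, 1 ≤ c → c ≤ α.foldr max 0 →
    ((ngs T).filter (fun p => p.2 = c)).card = (Sset α c).card
  inv1 : ∀ c₁ c₂ s v, c₁ < c₂ → c₂ ≤ α.foldr max 0 → (s, c₁) ∈ ngs T →
    v ∈ Sset α c₁ → rk α c₁ v = kk T c₁ s → rk α c₂ v ≤ kk T c₂ s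
  inv2 : ∀ c₁ c₂ r v₁ v₂, c₁ < c₂ → c₂ ≤ α.foldr max 0 → (r, c₁) ∈ T.ghosts →
    (r, c₂) ∈ T.cells → v₁ ∈ Sset α c₁ → rk α c₁ v₁ = kk T c₁ r →
    v₂ ∈ Sset α c₂ → rk α c₂ v₂ = kk T c₂ r → v₁ < v₂
  inv4 : ∀ r c, (r, c) ∈ T.ghosts → ∃ m, m < r ∧ (m, c) ∈ ngs T

/-- A maximal-row element of the truncated column, realizing the count. -/
lemma exists_top {T : Diagram} {c r : ℕ} (h : 1 ≤ kk T c r) :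
    ∃ m, m ≤ r ∧ (m, c) ∈ ngs T ∧ kk T c m = kk T c r := by
  set F := (ngs T).filter (fun p => p.2 = c ∧ p.1 ≤ r) with hF
  have hne : F.Nonempty := Finset.card_pos.1 (by exact h)
  obtain ⟨q, hq, hqmax⟩ := Finset.exists_max_image F Prod.fst hne
  have hq' := hq
  rw [hF, Finset.mem_filter] at hq'
  obtain ⟨hqng, hqc, hqr⟩ := hq'
  refine ⟨q.1, hqr, ?_, ?_⟩
  · have : (q.1, c) = q := by
      obtain ⟨q1, q2⟩ := q
      simp_all
    rwa [this]
  · unfold kk kkf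
    congr 1
    ext p
    rw [Finset.mem_filter, Finset.mem_filter]
    constructor
    · rintro ⟨hp, hpc, hpq⟩
      exact ⟨hp, hpc, le_trans hpq hqr⟩
    · rintro ⟨hp, hpc, hpr⟩
      exact ⟨hp, hpc, hqmax p (by rw [hF, Finset.mem_filter]; exact ⟨hp, hpc, hpr⟩)⟩

/-- Generalized invariant (1): works for arbitrary rows. -/
lemma P1gen {α : List ℕ} {T : Diagram} (hI : Inv α T) {c₁ c₂ r v : ℕ}
    (hc : c₁ < c₂) (hN : c₂ ≤ α.foldr max 0) (hv : v ∈ Sset α c₁)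
    (hrk : rk α c₁ v = kk T c₁ r) : rk α c₂ v ≤ kk T c₂ r := by
  have h1 : 1 ≤ kk T c₁ r := hrk ▸ rk_pos hv
  obtain ⟨m, hmr, hmng, hkkm⟩ := exists_top h1
  have := hI.inv1 c₁ c₂ m v hc hN hmng hv (by rw [hrk, hkkm])
  exact le_trans this (kkf_mono hmr)

/-- Derived "hole" lemma: a run in column `c₁` topped by a hole in column `c₂`. -/
lemma lemD {α : List ℕ} {T : Diagram} (hI : Inv α T) {c₁ c₂ r s v : ℕ}
    (hc : c₁ < c₂) (hN : c₂ ≤ α.foldr max 0) (hrs : r < s)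
    (hrun : ∀ t, r < t → t ≤ s → ((t : ℕ), c₁) ∈ ngs T)
    (hhole : ((s : ℕ), c₂) ∉ T.cells)
    (hv : v ∈ Sset α c₁) (hrk : rk α c₁ v = kk T c₁ r + 1) :
    rk α c₂ v ≤ kk T c₂ r := by
  set d := s - r with hd
  have hsd : s = r + d := by omega
  have k1s : kk T c₁ s = kk T c₁ r + d := by
    rw [hsd]
    exact kkf_run (fun t ht1 ht2 => hrun t ht1 (by omega))
  have hcell := hrun s (by omega) (le_refl s)
  have hb := hI.bounds (s, c₁) (by exact Finset.mem_sdiff.1 hcell |>.1)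
  have hc₁1 : 1 ≤ c₁ := hb.2.1
  have hc₁N : c₁ ≤ α.foldr max 0 := by omega
  have hcard : kk T c₁ s ≤ (Sset α c₁).card := by
    calc kk T c₁ s ≤ ((ngs T).filter (fun p => p.2 = c₁)).card := kkf_le_col _ _ _
      _ = (Sset α c₁).card := hI.colcard c₁ hc₁1 hc₁N
  obtain ⟨w, hw, hrkw⟩ := exists_rk α c₁ (kk T c₁ s) (by omega) hcard
  have hvw : v ≤ w := le_of_rk_le hv hw (by omega)
  have hi1 : rk α c₂ w ≤ kk T c₂ s := hI.inv1 c₁ c₂ s w hc hN hcell hw hrkw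
  have hngs : ((s : ℕ), c₂) ∉ ngs T := fun h => hhole (Finset.mem_sdiff.1 h).1
  have khole : kk T c₂ s = kk T c₂ (s - 1) := kkf_pred_of_notMem (by omega) hngs
  have k2b : kk T c₂ (s - 1) ≤ kk T c₂ r + (d - 1) := by
    have : s - 1 = r + (d - 1) := by omega
    rw [this]
    exact kkf_add_le _ _ _ _
  have gap := rk_gap (α := α) (le_of_lt hc) hvw
  omega

/-- The invariant holds for the initial lock diagram. -/
lemma Inv_init (α : List ℕ) : Inv α ⟨lockDiagram α, ∅⟩ := by
  have hng : ngs ⟨lockDiagram α, ∅⟩ = lockDiagram α := by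
    simp [ngs]
  constructor
  · intro p hp
    simp at hp
  · intro p hp
    exact lock_bounds hp
  · intro c hc1 hcN
    rw [hng, lock_col hcN,
      Finset.card_image_of_injective _ (fun x y h => (Prod.mk.injEq .. ▸ h).1)]
  · intro c₁ c₂ s v hc hN hcell hv hrk
    rw [hng] at hcell
    have hc₁N : c₁ ≤ α.foldr max 0 := by omega
    have hs : s ∈ Sset α c₁ := (mem_lock hc₁N).1 hcell
    have hkk1 : kk (⟨lockDiagram α, ∅⟩ : Diagram) c₁ s = rk α c₁ s := by
      unfold kk; rw [hng]; exact lock_kk hc₁N s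
    have hkk2 : kk (⟨lockDiagram α, ∅⟩ : Diagram) c₂ s = rk α c₂ s := by
      unfold kk; rw [hng]; exact lock_kk hN s
    have hvs : v = s := by
      have h1 : rk α c₁ v = rk α c₁ s := by rw [hrk, hkk1]
      exact le_antisymm (le_of_rk_le hv hs (le_of_eq h1))
        (le_of_rk_le hs hv (le_of_eq h1.symm))
    rw [hvs, hkk2]
  · intro c₁ c₂ r v₁ v₂ _ _ hg
    simp at hg
  · intro r c hg
    simp at hg

end LockAux


namespace LockAux

open Finset

lemma step_ngs {O T : Diagram} {r₀ c₀ rhat : ℕ} (hgs : O.ghosts ⊆ O.cells)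
    (hmv : KohnertMovable O r₀ c₀ rhat)
    (hT : T = applyKohnert O r₀ c₀ rhat ∨ T = applyGhost O r₀ c₀ rhat) :
    ngs T = insert ((rhat : ℕ), c₀) ((ngs O).erase (r₀, c₀)) := by
  obtain ⟨⟨hcell, hrm⟩, hbng, hr1, hrr, hemp, hbet⟩ := hmv
  have hane : ((rhat : ℕ), c₀) ≠ (r₀, c₀) := by
    intro h
    have h1 : rhat = r₀ := (Prod.mk.injEq .. ▸ h).1
    omega
  have hag : ((rhat : ℕ), c₀) ∉ O.ghosts := fun h => hemp (hgs h)
  have hbne : ((r₀ : ℕ), c₀) ≠ ((rhat : ℕ), c₀) := fun h => hane h.symm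
  rcases hT with rfl | rfl
  · ext p
    simp only [ngs, applyKohnert, Finset.mem_sdiff, Finset.mem_insert, Finset.mem_erase]
    constructor
    · rintro ⟨rfl | ⟨hpb, hpc⟩, hpg⟩
      · exact Or.inl rfl
      · exact Or.inr ⟨hpb, hpc, hpg⟩
    · rintro (rfl | ⟨hpb, hpc, hpg⟩)
      · exact ⟨Or.inl rfl, hag⟩
      · exact ⟨Or.inr ⟨hpb, hpc⟩, hpg⟩
  · ext p
    simp only [ngs, applyGhost, Finset.mem_sdiff, Finset.mem_insert, Finset.mem_erase]
    constructor
    · rintro ⟨rfl | hpc, hpg⟩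
      · exact Or.inl rfl
      · push_neg at hpg
        exact Or.inr ⟨hpg.1, hpc, hpg.2⟩
    · rintro (rfl | ⟨hpb, hpc, hpg⟩)
      · refine ⟨Or.inl rfl, ?_⟩
        push_neg
        exact ⟨hane, hag⟩
      · refine ⟨Or.inr hpc, ?_⟩
        push_neg
        exact ⟨hpb, hpg⟩

section Upd

variable {A : Finset (ℕ × ℕ)} {rhat r₀ c₀ : ℕ}

lemma kkf_upd_ne {c : ℕ} (hc : c ≠ c₀) (r : ℕ) :
    kkf (insert ((rhat : ℕ), c₀) (A.erase (r₀, c₀))) c r = kkf A c r := by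
  unfold kkf
  congr 1
  ext p
  simp only [Finset.mem_filter, Finset.mem_insert, Finset.mem_erase]
  constructor
  · rintro ⟨rfl | ⟨hpb, hpA⟩, hpc, hpr⟩
    · exact absurd hpc.symm hc
    · exact ⟨hpA, hpc, hpr⟩
  · rintro ⟨hpA, hpc, hpr⟩
    refine ⟨Or.inr ⟨?_, hpA⟩, hpc, hpr⟩
    intro h
    rw [h] at hpc
    exact hc hpc.symm

lemma kkf_upd_mid (ha : ((rhat : ℕ), c₀) ∉ A) (hrr : rhat < r₀) {r : ℕ}
    (h1 : rhat ≤ r) (h2 : r < r₀) :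
    kkf (insert ((rhat : ℕ), c₀) (A.erase (r₀, c₀))) c₀ r = kkf A c₀ r + 1 := by
  unfold kkf
  have heq : (insert ((rhat : ℕ), c₀) (A.erase (r₀, c₀))).filter
      (fun p => p.2 = c₀ ∧ p.1 ≤ r) =
      insert ((rhat : ℕ), c₀) (A.filter (fun p => p.2 = c₀ ∧ p.1 ≤ r)) := by
    ext p
    simp only [Finset.mem_filter, Finset.mem_insert, Finset.mem_erase]
    constructor
    · rintro ⟨rfl | ⟨hpb, hpA⟩, hpc, hpr⟩
      · exact Or.inl rfl
      · exact Or.inr ⟨hpA, hpc, hpr⟩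
    · rintro (rfl | ⟨hpA, hpc, hpr⟩)
      · exact ⟨Or.inl rfl, rfl, h1⟩
      · refine ⟨Or.inr ⟨?_, hpA⟩, hpc, hpr⟩
        intro h
        have h1 : p.1 = r₀ := by rw [h]
        omega
  rw [heq, Finset.card_insert_of_notMem]
  intro h
  exact ha (Finset.mem_filter.1 h).1

lemma kkf_upd_lo (hrr : rhat < r₀) {r : ℕ} (h : r < rhat) :
    kkf (insert ((rhat : ℕ), c₀) (A.erase (r₀, c₀))) c₀ r = kkf A c₀ r := by
  unfold kkf
  congr 1
  ext p
  simp only [Finset.mem_filter, Finset.mem_insert, Finset.mem_erase]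
  constructor
  · rintro ⟨rfl | ⟨hpb, hpA⟩, hpc, hpr⟩
    · exact absurd (show rhat ≤ r from hpr) (by omega)
    · exact ⟨hpA, hpc, hpr⟩
  · rintro ⟨hpA, hpc, hpr⟩
    refine ⟨Or.inr ⟨?_, hpA⟩, hpc, hpr⟩
    intro hpe
    have h1 : p.1 = r₀ := by rw [hpe]
    omega

lemma kkf_upd_hi (ha : ((rhat : ℕ), c₀) ∉ A) (hb : ((r₀ : ℕ), c₀) ∈ A)
    (hrr : rhat < r₀) {r : ℕ} (h : r₀ ≤ r) :
    kkf (insert ((rhat : ℕ), c₀) (A.erase (r₀, c₀))) c₀ r = kkf A c₀ r := by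
  unfold kkf
  have heq : (insert ((rhat : ℕ), c₀) (A.erase (r₀, c₀))).filter
      (fun p => p.2 = c₀ ∧ p.1 ≤ r) =
      insert ((rhat : ℕ), c₀)
        ((A.filter (fun p => p.2 = c₀ ∧ p.1 ≤ r)).erase (r₀, c₀)) := by
    ext p
    simp only [Finset.mem_filter, Finset.mem_insert, Finset.mem_erase]
    constructor
    · rintro ⟨rfl | ⟨hpb, hpA⟩, hpc, hpr⟩
      · exact Or.inl rfl
      · exact Or.inr ⟨hpb, hpA, hpc, hpr⟩
    · rintro (rfl | ⟨hpb, hpA, hpc, hpr⟩)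
      · exact ⟨Or.inl rfl, rfl, by omega⟩
      · exact ⟨Or.inr ⟨hpb, hpA⟩, hpc, hpr⟩
  rw [heq, Finset.card_insert_of_notMem, Finset.card_erase_of_mem]
  · have hpos : 0 < (A.filter (fun p => p.2 = c₀ ∧ p.1 ≤ r)).card :=
      Finset.card_pos.2 ⟨((r₀ : ℕ), c₀), Finset.mem_filter.2 ⟨hb, rfl, h⟩⟩
    omega
  · exact Finset.mem_filter.2 ⟨hb, rfl, h⟩
  · intro hmem
    exact ha (Finset.mem_filter.1 (Finset.mem_erase.1 hmem).2).1

end Upd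

lemma Inv_step {α : List ℕ} {O T : Diagram} (hI : Inv α O) (hstep : KStep O T) :
    Inv α T := by
  obtain ⟨r₀, c₀, rhat, hmv, hT⟩ := hstep
  have hngsT := step_ngs hI.gsub hmv hT
  obtain ⟨⟨hcell, hrm⟩, hbng, hr1, hrr, hemp, hbet⟩ := hmv
  have hbin : ((r₀ : ℕ), c₀) ∈ ngs O := Finset.mem_sdiff.2 ⟨hcell, hbng⟩
  have hain : ((rhat : ℕ), c₀) ∉ ngs O := fun h => hemp (Finset.mem_sdiff.1 h).1
  have hc₀b := hI.bounds _ hcell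
  have kne : ∀ c r, c ≠ c₀ → kk T c r = kk O c r := by
    intro c r h
    rw [kk, hngsT]
    exact kkf_upd_ne h r
  have kmid : ∀ r, rhat ≤ r → r < r₀ → kk T c₀ r = kk O c₀ r + 1 := by
    intro r h1 h2
    rw [kk, hngsT]
    exact kkf_upd_mid hain hrr h1 h2
  have kout : ∀ r, r < rhat ∨ r₀ ≤ r → kk T c₀ r = kk O c₀ r := by
    intro r h
    rw [kk, hngsT]
    rcases h with h | h
    · exact kkf_upd_lo hrr h
    · exact kkf_upd_hi hain hbin hrr h
  have kge : ∀ r, kk O c₀ r ≤ kk T c₀ r := by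
    intro r
    rcases lt_or_ge r rhat with h | h
    · rw [kout r (Or.inl h)]
    · rcases lt_or_ge r r₀ with h' | h'
      · rw [kmid r h h']
        omega
      · rw [kout r (Or.inr h')]
  have kge' : ∀ c r, kk O c r ≤ kk T c r := by
    intro c r
    by_cases h : c = c₀
    · subst h
      exact kge r
    · rw [kne c r h]
  have hg1 : ∀ p ∈ T.ghosts, p = ((r₀ : ℕ), c₀) ∨ p ∈ O.ghosts := by
    rcases hT with rfl | rfl
    · intro p hp
      exact Or.inr hp
    · intro p hp
      simp only [applyGhost, Finset.mem_insert] at hp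
      exact hp
  have hc2 : ∀ p ∈ T.cells, p = ((rhat : ℕ), c₀) ∨ p ∈ O.cells := by
    rcases hT with rfl | rfl
    · intro p hp
      simp only [applyKohnert, Finset.mem_insert, Finset.mem_erase] at hp
      rcases hp with rfl | ⟨_, hp⟩
      · exact Or.inl rfl
      · exact Or.inr hp
    · intro p hp
      simp only [applyGhost, Finset.mem_insert] at hp
      exact hp
  have hgO : ∀ p ∈ O.ghosts, p ∈ T.ghosts := by
    rcases hT with rfl | rfl
    · intro p hp
      exact hp
    · intro p hp
      simp only [applyGhost, Finset.mem_insert]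
      exact Or.inr hp
  constructor
  · -- gsub
    rcases hT with rfl | rfl
    · intro x hx
      simp only [applyKohnert, Finset.mem_insert, Finset.mem_erase] at *
      refine Or.inr ⟨?_, hI.gsub hx⟩
      intro h
      rw [h] at hx
      exact hbng hx
    · intro x hx
      simp only [applyGhost, Finset.mem_insert] at *
      rcases hx with rfl | hx
      · exact Or.inr hcell
      · exact Or.inr (hI.gsub hx)
  · -- bounds
    intro p hp
    rcases hc2 p hp with rfl | hp'
    · exact ⟨hr1, hc₀b.2⟩
    · exact hI.bounds p hp'
  · -- colcard
    intro c hc1 hcN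
    rw [hngsT]
    by_cases hcc : c₀ = c
    · subst hcc
      have heq : (insert ((rhat : ℕ), c₀) ((ngs O).erase (r₀, c₀))).filter
          (fun p => p.2 = c₀) =
          insert ((rhat : ℕ), c₀) (((ngs O).filter (fun p => p.2 = c₀)).erase (r₀, c₀)) := by
        ext p
        simp only [Finset.mem_filter, Finset.mem_insert, Finset.mem_erase]
        constructor
        · rintro ⟨rfl | ⟨hpb, hpA⟩, hpc⟩
          · exact Or.inl rfl
          · exact Or.inr ⟨hpb, hpA, hpc⟩
        · rintro (rfl | ⟨hpb, hpA, hpc⟩)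
          · exact ⟨Or.inl rfl, rfl⟩
          · exact ⟨Or.inr ⟨hpb, hpA⟩, hpc⟩
      rw [heq, Finset.card_insert_of_notMem, Finset.card_erase_of_mem]
      · have hpos : 0 < ((ngs O).filter (fun p => p.2 = c₀)).card :=
          Finset.card_pos.2 ⟨((r₀ : ℕ), c₀), Finset.mem_filter.2 ⟨hbin, rfl⟩⟩
        have := hI.colcard c₀ hc1 hcN
        omega
      · exact Finset.mem_filter.2 ⟨hbin, rfl⟩
      · intro hmem
        exact hain (Finset.mem_filter.1 (Finset.mem_erase.1 hmem).2).1
    · have heq : (insert ((rhat : ℕ), c₀) ((ngs O).erase (r₀, c₀))).filter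
          (fun p => p.2 = c) = (ngs O).filter (fun p => p.2 = c) := by
        ext p
        simp only [Finset.mem_filter, Finset.mem_insert, Finset.mem_erase]
        constructor
        · rintro ⟨rfl | ⟨hpb, hpA⟩, hpc⟩
          · exact absurd hpc hcc
          · exact ⟨hpA, hpc⟩
        · rintro ⟨hpA, hpc⟩
          refine ⟨Or.inr ⟨?_, hpA⟩, hpc⟩
          intro h
          apply hcc
          rw [h] at hpc
          exact hpc
      rw [heq]
      exact hI.colcard c hc1 hcN
  · -- inv1
    intro c₁ c₂ s v hc hN hcellT hv hrk
    have hmemT := hcellT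
    rw [hngsT, Finset.mem_insert, Finset.mem_erase] at hmemT
    by_cases hcc : c₀ = c₁
    · subst hcc
      have hc₂ne : c₂ ≠ c₀ := by omega
      rw [kne c₂ s hc₂ne]
      by_cases hmidr : rhat ≤ s ∧ s < r₀
      · rw [kmid s hmidr.1 hmidr.2] at hrk
        exact lemD hI hc hN hmidr.2
          (fun t ht1 ht2 => by
            rcases eq_or_lt_of_le ht2 with rfl | ht2'
            · exact hbin
            · exact Finset.mem_sdiff.2 (hbet t (by omega) (by omega)))
          (hrm c₂ hc) hv hrk
      · have hsO : ((s : ℕ), c₀) ∈ ngs O := by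
          rcases hmemT with heq | ⟨_, hmem⟩
          · have : s = rhat := (Prod.mk.injEq .. ▸ heq).1
            omega
          · exact hmem
        rw [kout s (by omega)] at hrk
        exact hI.inv1 c₀ c₂ s v hc hN hsO hv hrk
    · have hsO : ((s : ℕ), c₁) ∈ ngs O := by
        rcases hmemT with heq | ⟨_, hmem⟩
        · have h2 : c₁ = c₀ := (Prod.mk.injEq .. ▸ heq).2
          exact absurd h2.symm hcc
        · exact hmem
      rw [kne c₁ s (fun h => hcc h.symm)] at hrk
      exact le_trans (hI.inv1 c₁ c₂ s v hc hN hsO hv hrk) (kge' c₂ s)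
  · -- inv2
    intro c₁ c₂ r v₁ v₂ hc hN hgT hcT hv₁ hrk₁ hv₂ hrk₂
    rcases hg1 _ hgT with hgb | hgO'
    · -- new ghost (r₀, c₀): vacuous
      have hr : r₀ = r := ((Prod.mk.injEq .. ▸ hgb).1).symm
      have hcc : c₀ = c₁ := ((Prod.mk.injEq .. ▸ hgb).2).symm
      subst hr; subst hcc
      rcases hc2 _ hcT with heq | hmem
      · have h3 : c₂ = c₀ := (Prod.mk.injEq .. ▸ heq).2
        omega
      · exact absurd hmem (hrm c₂ hc)
    · rcases hc2 _ hcT with heq | hmem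
      · -- right cell is the new cell (rhat, c₀)
        have hr : rhat = r := ((Prod.mk.injEq .. ▸ heq).1).symm
        have hcc : c₀ = c₂ := ((Prod.mk.injEq .. ▸ heq).2).symm
        subst hr; subst hcc
        have hc₁ne : c₁ ≠ c₀ := by omega
        rw [kne c₁ rhat hc₁ne] at hrk₁
        rw [kmid rhat (le_refl _) hrr] at hrk₂
        have h1 : rk α c₀ v₁ ≤ kk O c₀ rhat := P1gen hI hc hN hv₁ hrk₁
        have hv₁' : v₁ ∈ Sset α c₀ := Sset_mono (le_of_lt hc) hv₁
        exact lt_of_rk_lt hv₁' hv₂ (by omega)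
      · -- right cell is an old cell
        by_cases hcc₁ : c₀ = c₁
        · subst hcc₁
          have hc₂ne : c₂ ≠ c₀ := by omega
          have hrout : r < rhat ∨ r₀ ≤ r := by
            by_contra hcon
            push_neg at hcon
            obtain ⟨h1, h2⟩ := hcon
            rcases eq_or_lt_of_le h1 with rfl | h1'
            · exact hemp (hI.gsub hgO')
            · exact (hbet r h1' h2).2 hgO'
          rw [kout r hrout] at hrk₁
          rw [kne c₂ r hc₂ne] at hrk₂
          exact hI.inv2 c₀ c₂ r v₁ v₂ hc hN hgO' hmem hv₁ hrk₁ hv₂ hrk₂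
        · rw [kne c₁ r (fun h => hcc₁ h.symm)] at hrk₁
          by_cases hcc₂ : c₀ = c₂
          · subst hcc₂
            by_cases hmidr : rhat ≤ r ∧ r < r₀
            · have hrne : r ≠ rhat := by
                intro h
                subst h
                exact hemp hmem
              have hrng : ((r : ℕ), c₀) ∈ ngs O :=
                Finset.mem_sdiff.2 (hbet r (by omega) hmidr.2)
              rw [kmid r hmidr.1 hmidr.2] at hrk₂
              have hk1 : 1 ≤ kk O c₀ r :=
                Finset.card_pos.2 ⟨((r : ℕ), c₀), Finset.mem_filter.2 ⟨hrng, rfl, le_refl _⟩⟩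
              have hkle : kk O c₀ r ≤ (Sset α c₀).card := by
                calc kk O c₀ r ≤ ((ngs O).filter (fun p => p.2 = c₀)).card := kkf_le_col _ _ _
                  _ = (Sset α c₀).card := hI.colcard c₀ (by omega) hN
              obtain ⟨v₂', hv₂', hrk₂'⟩ := exists_rk α c₀ (kk O c₀ r) hk1 hkle
              have hlt1 : v₁ < v₂' :=
                hI.inv2 c₁ c₀ r v₁ v₂' hc hN hgO' hmem hv₁ hrk₁ hv₂' hrk₂'
              have hlt2 : v₂' < v₂ := lt_of_rk_lt hv₂' hv₂ (by omega)
              omega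
            · rw [kout r (by omega)] at hrk₂
              exact hI.inv2 c₁ c₀ r v₁ v₂ hc hN hgO' hmem hv₁ hrk₁ hv₂ hrk₂
          · rw [kne c₂ r (fun h => hcc₂ h.symm)] at hrk₂
            exact hI.inv2 c₁ c₂ r v₁ v₂ hc hN hgO' hmem hv₁ hrk₁ hv₂ hrk₂
  · -- inv4
    intro g c hgT
    have hamem : ((rhat : ℕ), c₀) ∈ ngs T := by
      rw [hngsT]
      exact Finset.mem_insert_self _ _
    rcases hg1 _ hgT with hgb | hgO'
    · have hg : r₀ = g := ((Prod.mk.injEq .. ▸ hgb).1).symm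
      have hcc : c₀ = c := ((Prod.mk.injEq .. ▸ hgb).2).symm
      subst hg; subst hcc
      exact ⟨rhat, hrr, hamem⟩
    · obtain ⟨m, hmg, hmng⟩ := hI.inv4 g c hgO'
      by_cases hmb : ((m : ℕ), c) = ((r₀ : ℕ), c₀)
      · have hm : r₀ = m := ((Prod.mk.injEq .. ▸ hmb).1).symm
        have hcc : c₀ = c := ((Prod.mk.injEq .. ▸ hmb).2).symm
        subst hm; subst hcc
        exact ⟨rhat, by omega, hamem⟩
      · refine ⟨m, hmg, ?_⟩
        rw [hngsT]
        exact Finset.mem_insert_of_mem (Finset.mem_erase.2 ⟨hmb, hmng⟩)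

end LockAux


namespace LockAux

open Finset

lemma Inv_reach {α : List ℕ} {T : Diagram}
    (hT : T ∈ KKD ⟨lockDiagram α, ∅⟩) : Inv α T := by
  have h : Relation.ReflTransGen KStep (⟨lockDiagram α, ∅⟩ : Diagram) T := hT
  clear hT
  induction h with
  | refl => exact Inv_init α
  | tail _ hstep ih => exact Inv_step ih hstep

lemma lab_spec {α : List ℕ} {T : Diagram} (hI : Inv α T) {L : ℕ × ℕ → ℕ}
    (hL : IsLockLabeling α (T.cells \ T.ghosts) L) {p : ℕ × ℕ} (hp : p ∈ ngs T) :
    L p ∈ Sset α p.2 ∧ rk α p.2 (L p) = kk T p.2 p.1 := by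
  obtain ⟨hL1, hL2, hL3, hL4, hL5⟩ := hL
  have hpc : p ∈ T.cells \ T.ghosts := hp
  have hb := hI.bounds p (Finset.mem_sdiff.1 hp).1
  set c := p.2 with hcdef
  have hex : ∀ j ∈ Sset α c, ∃! q, q ∈ T.cells \ T.ghosts ∧ q.2 = c ∧ L q = j := by
    intro j hj
    rw [mem_Sset] at hj
    obtain ⟨hj1, hj2, hj3⟩ := hj
    have ha : 0 < α.getD (j - 1) 0 := by omega
    exact hL2 j hj1 hj2 ha c (by omega) hb.2.2
  set X := (ngs T).filter (fun q => q.2 = c) with hX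
  have hXcard : X.card = (Sset α c).card := hI.colcard c hb.2.1 hb.2.2
  have himg : Sset α c ⊆ X.image L := by
    intro j hj
    obtain ⟨q, ⟨hq1, hq2, hq3⟩, _⟩ := hex j hj
    rw [Finset.mem_image]
    exact ⟨q, Finset.mem_filter.2 ⟨hq1, hq2⟩, hq3⟩
  have hSeqimg : Sset α c = X.image L := by
    apply Finset.eq_of_subset_of_card_le himg
    calc (X.image L).card ≤ X.card := Finset.card_image_le
      _ = (Sset α c).card := hXcard
  have hmemX : p ∈ X := Finset.mem_filter.2 ⟨hp, rfl⟩
  have hLp : L p ∈ Sset α c := by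
    rw [hSeqimg]
    exact Finset.mem_image_of_mem L hmemX
  have hLmem : ∀ q ∈ X, L q ∈ Sset α c := by
    intro q hq
    rw [hSeqimg]
    exact Finset.mem_image_of_mem L hq
  have hinj : ∀ q ∈ X, ∀ q' ∈ X, L q = L q' → q = q' := by
    intro q hq q' hq' he
    have hq1 := Finset.mem_filter.1 hq
    have hq'1 := Finset.mem_filter.1 hq'
    obtain ⟨u, _, huniq⟩ := hex (L q) (hLmem q hq)
    have h1 : q = u := huniq q ⟨hq1.1, hq1.2, rfl⟩
    have h2 : q' = u := huniq q' ⟨hq'1.1, hq'1.2, he.symm⟩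
    rw [h1, h2]
  refine ⟨hLp, ?_⟩
  have hkk : kk T c p.1 = (X.filter (fun q => q.1 ≤ p.1)).card := by
    unfold kk kkf
    rw [hX, Finset.filter_filter]
  rw [hkk, rk]
  symm
  apply Finset.card_bij (fun q _ => L q)
  · intro q hq
    have hq1 := Finset.mem_filter.1 hq
    have hq2 := Finset.mem_filter.1 hq1.1
    rw [Finset.mem_filter]
    refine ⟨hLmem q hq1.1, ?_⟩
    rcases lt_or_eq_of_le hq1.2 with hlt | heq
    · exact le_of_lt (hL5 q hq2.1 p hpc (by rw [hq2.2]) hlt)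
    · have : q = p := by
        obtain ⟨q1, q2⟩ := q
        obtain ⟨p1, p2⟩ := p
        simp only [Prod.mk.injEq]
        exact ⟨heq, hq2.2⟩
      rw [this]
  · intro q hq q' hq' he
    exact hinj q (Finset.mem_filter.1 hq).1 q' (Finset.mem_filter.1 hq').1 he
  · intro v hv
    rw [Finset.mem_filter] at hv
    obtain ⟨q, ⟨hq1, hq2, hq3⟩, _⟩ := hex v hv.1
    have hqX : q ∈ X := Finset.mem_filter.2 ⟨hq1, hq2⟩
    refine ⟨q, Finset.mem_filter.2 ⟨hqX, ?_⟩, hq3⟩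
    by_contra hcon
    push_neg at hcon
    have := hL5 p hpc q hq1 (by rw [hq2]) hcon
    omega

lemma ghost_top {α : List ℕ} {T : Diagram} (hI : Inv α T) {r c : ℕ}
    (hg : (r, c) ∈ T.ghosts) :
    ∃ M, ((M : ℕ), c) ∈ ngs T ∧
      (((T.cells \ T.ghosts).filter (fun p => p.2 = c ∧ p.1 ≤ r)).sup Prod.fst) = M ∧
      kk T c M = kk T c r := by
  obtain ⟨m, hmr, hmng⟩ := hI.inv4 r c hg
  have hne : ((T.cells \ T.ghosts).filter (fun p => p.2 = c ∧ p.1 ≤ r)).Nonempty :=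
    ⟨(m, c), Finset.mem_filter.2 ⟨hmng, rfl, le_of_lt hmr⟩⟩
  obtain ⟨q, hq, hqmax⟩ := Finset.exists_max_image _ Prod.fst hne
  have hq' := Finset.mem_filter.1 hq
  refine ⟨q.1, ?_, ?_, ?_⟩
  · rw [← hq'.2.1]
    exact hq'.1
  · apply le_antisymm
    · exact Finset.sup_le (fun p hp => hqmax p hp)
    · exact Finset.le_sup hq
  · unfold kk kkf
    congr 1
    ext p
    simp only [Finset.mem_filter]
    constructor
    · rintro ⟨h1, h2, h3⟩
      exact ⟨h1, h2, le_trans h3 hq'.2.2⟩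
    · rintro ⟨h1, h2, h3⟩
      exact ⟨h1, h2, hqmax p (Finset.mem_filter.2 ⟨h1, h2, h3⟩)⟩

end LockAux

/-- For a lock diagram D, T ∈ KKD(D) with its lock-tableau
labeling, ghost cells in the same row have strictly increasing labels from
left to right. -/
theorem lock_ghost_labels_increasing (α : List ℕ) (T : Diagram)
    (hT : T ∈ KKD ⟨lockDiagram α, ∅⟩) (L : ℕ × ℕ → ℕ)
    (hL : IsLockLabeling α (T.cells \ T.ghosts) L)
    (r c₁ c₂ : ℕ) (h₁ : (r, c₁) ∈ T.ghosts) (h₂ : (r, c₂) ∈ T.ghosts)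
    (hc : c₁ < c₂) :
    ghostLabel T L r c₁ < ghostLabel T L r c₂ := by
  have hI : LockAux.Inv α T := LockAux.Inv_reach hT
  have hc₂cell : (r, c₂) ∈ T.cells := hI.gsub h₂
  have hc₂N : c₂ ≤ α.foldr max 0 := (hI.bounds _ hc₂cell).2.2
  obtain ⟨M₁, hM₁ng, hM₁sup, hM₁kk⟩ := LockAux.ghost_top hI h₁
  obtain ⟨M₂, hM₂ng, hM₂sup, hM₂kk⟩ := LockAux.ghost_top hI h₂
  have hs₁ := LockAux.lab_spec hI hL hM₁ng
  have hs₂ := LockAux.lab_spec hI hL hM₂ng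
  have hlt : L (M₁, c₁) < L (M₂, c₂) := by
    apply hI.inv2 c₁ c₂ r (L (M₁, c₁)) (L (M₂, c₂)) hc hc₂N h₁ hc₂cell
    · exact hs₁.1
    · rw [hs₁.2, hM₁kk]
    · exact hs₂.1
    · rw [hs₂.2, hM₂kk]
  unfold ghostLabel
  rw [hM₁sup, hM₂sup]
  exact hlt
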